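/- arXiv:1404.4306 — 2 statements merged into one kernel-verified Lean document; each statement's English description precedes it below -/
import Mathlib

section
/- Let Φ be a Musielak–Orlicz function on a σ-finite non-atomic measure space (T,Σ,μ). If u : T → [0,∞) is measurable and Φ(t,u(t)) < ∞ for μ-a.e. t, then there exists a sequence of non-negative measurable functions (u_n) with u_n ↑ u pointwise and ∫_T Φ*(t, Φ'_-(t, u_n(t))) dμ < ∞ for every n. -/
open MeasureTheory ENNReal NNReal Filter Topology

noncomputable section

/-- A measure is non-atomic if every set of positive measure contains a
measurable subset of strictly smaller positive measure. -/
def IsNonatomic {T : Type*} [MeasurableSpace T] (μ : Measure T) : Prop :=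
  ∀ s : Set T, MeasurableSet s → 0 < μ s →
    ∃ t : Set T, t ⊆ s ∧ MeasurableSet t ∧ 0 < μ t ∧ μ t < μ s

/-- A Musielak--Orlicz function on `(T, Σ, μ)`. -/
structure MOFunction (T : Type*) [MeasurableSpace T] (μ : Measure T) where
  toFun : T → ℝ≥0∞ → ℝ≥0∞
  measurable' : ∀ u : ℝ≥0∞, Measurable fun t => toFun t u
  convex' : ∀ᵐ t ∂μ, ∀ a b : ℝ≥0∞, ∀ p : ℝ≥0, p ≤ 1 →
    toFun t (p • a + (1 - p) • b) ≤ p • toFun t a + (1 - p) • toFun t b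
  lsc' : ∀ᵐ t ∂μ, LowerSemicontinuous (toFun t)
  zero' : ∀ᵐ t ∂μ, toFun t 0 = 0
  limZero' : ∀ᵐ t ∂μ, Tendsto (toFun t) (nhdsWithin 0 (Set.Ioi 0)) (nhds 0)
  top' : ∀ᵐ t ∂μ, toFun t ⊤ = ⊤

namespace MOFunction

variable {T : Type*} [MeasurableSpace T] {μ : Measure T}

/-- Left derivative of a (convex) function `φ : ℝ≥0∞ → ℝ≥0∞`, with the
convention that it vanishes at `0`. -/
def leftDeriv (φ : ℝ≥0∞ → ℝ≥0∞) (u : ℝ≥0∞) : ℝ≥0∞ :=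
  ⨆ x ∈ Set.Iio u, (φ u - φ x) / (u - x)

/-- Right derivative of a (convex) function `φ : ℝ≥0∞ → ℝ≥0∞`. -/
def rightDeriv (φ : ℝ≥0∞ → ℝ≥0∞) (u : ℝ≥0∞) : ℝ≥0∞ :=
  ⨅ x ∈ Set.Ioi u, (φ x - φ u) / (x - u)

/-- The complementary (Young conjugate) function `Φ*`. -/
def conj (P : MOFunction T μ) : T → ℝ≥0∞ → ℝ≥0∞ :=
  fun t v => ⨆ u ∈ Set.Ioi (0 : ℝ≥0∞), u * v - P.toFun t u

/-- The modular `I_Φ(u) = ∫ Φ(t, |u(t)|) dμ`. -/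
def modular (P : MOFunction T μ) (u : T → ℝ) : ℝ≥0∞ :=
  ∫⁻ t, P.toFun t (ENNReal.ofReal |u t|) ∂μ

/-- The modular of the complementary function, `I_{Φ*}`. -/
def modularConj (P : MOFunction T μ) (v : T → ℝ) : ℝ≥0∞ :=
  ∫⁻ t, P.conj t (ENNReal.ofReal |v t|) ∂μ

/-- Membership in the Musielak--Orlicz space `L^Φ`. -/
def memLPhi (P : MOFunction T μ) (u : T → ℝ) : Prop :=
  Measurable u ∧ ∃ l : ℝ, 0 < l ∧ P.modular (fun t => l * u t) < ⊤

/-- Membership in `L^{Φ*}`. -/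
def memLPhiConj (P : MOFunction T μ) (v : T → ℝ) : Prop :=
  Measurable v ∧ ∃ l : ℝ, 0 < l ∧ P.modularConj (fun t => l * v t) < ⊤

/-- The Luxemburg norm on `L^Φ`. -/
def luxNorm (P : MOFunction T μ) (u : T → ℝ) : ℝ :=
  sInf {l : ℝ | 0 < l ∧ P.modular (fun t => u t / l) ≤ 1}

/-- The Luxemburg norm on `L^{Φ*}`. -/
def luxNormConj (P : MOFunction T μ) (v : T → ℝ) : ℝ :=
  sInf {l : ℝ | 0 < l ∧ P.modularConj (fun t => v t / l) ≤ 1}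

/-- The Orlicz norm on `L^Φ`. -/
def orliczNorm (P : MOFunction T μ) (u : T → ℝ) : ℝ :=
  sSup {r : ℝ | ∃ v : T → ℝ, Measurable v ∧ P.modularConj v ≤ 1 ∧
    r = |∫ t, u t * v t ∂μ|}

/-- The Orlicz norm on `L^{Φ*}`. -/
def orliczNormConj (P : MOFunction T μ) (v : T → ℝ) : ℝ :=
  sSup {r : ℝ | ∃ u : T → ℝ, Measurable u ∧ P.modular u ≤ 1 ∧
    r = |∫ t, u t * v t ∂μ|}

/-- The Amemiya functional `inf_{k>0} (1 + I_Φ(ku))/k` (equal to the Orlicz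
norm). -/
def amemiya (P : MOFunction T μ) (u : T → ℝ) : ℝ≥0∞ :=
  ⨅ k ∈ Set.Ioi (0 : ℝ), (1 + P.modular (fun t => k * u t)) / ENNReal.ofReal k

/-- The set `K(u)` of positive numbers attaining the infimum in the Amemiya
norm. -/
def Kset (P : MOFunction T μ) (u : T → ℝ) : Set ℝ :=
  {k | 0 < k ∧ (1 + P.modular (fun t => k * u t)) / ENNReal.ofReal k = P.amemiya u}

/-- `k_u^* = inf{k > 0 : I_{Φ*}(Φ'_+(t, |k u(t)|)) ≥ 1}`. -/
def kStar (P : MOFunction T μ) (u : T → ℝ) : ℝ :=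
  sInf {k : ℝ | 0 < k ∧
    1 ≤ ∫⁻ t, P.conj t (rightDeriv (P.toFun t) (ENNReal.ofReal (k * |u t|))) ∂μ}

/-- `b_{Φ*}(t) = sup{v ≥ 0 : Φ*(t,v) < ∞}`. -/
def bConj (P : MOFunction T μ) (t : T) : ℝ≥0∞ :=
  sSup {v : ℝ≥0∞ | P.conj t v < ⊤}

/-- `a_{Φ*}(t) = sup{v ≥ 0 : Φ*(t,v) = 0}`. -/
def aConj (P : MOFunction T μ) (t : T) : ℝ≥0∞ :=
  sSup {v : ℝ≥0∞ | P.conj t v = 0}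

/-- The `Δ₂`-condition. -/
def Delta2 (P : MOFunction T μ) : Prop :=
  ∃ (K : ℝ≥0∞) (f : T → ℝ≥0∞), Measurable f ∧ (∫⁻ t, P.toFun t (f t) ∂μ) < ⊤ ∧
    ∀ᵐ t ∂μ, ∀ u : ℝ≥0∞, f t ≤ u → P.toFun t (2 * u) ≤ K * P.toFun t u

/-- Dual norm of a functional with respect to the Luxemburg norm. -/
def dualNormLux (P : MOFunction T μ) (f : (T → ℝ) →ₗ[ℝ] ℝ) : ℝ :=
  sSup {r : ℝ | ∃ u : T → ℝ, P.memLPhi u ∧ P.luxNorm u ≤ 1 ∧ r = |f u|}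

/-- Dual norm of a functional with respect to the Orlicz norm. -/
def dualNormOrlicz (P : MOFunction T μ) (f : (T → ℝ) →ₗ[ℝ] ℝ) : ℝ :=
  sSup {r : ℝ | ∃ u : T → ℝ, P.memLPhi u ∧ P.orliczNorm u ≤ 1 ∧ r = |f u|}

/-- The order continuous part `f_c(u) = inf{sup_n f(u_n) : 0 ≤ u_n ↑ u}` of a
(positive) functional, evaluated at a nonnegative `u`. -/
def orderContPart (P : MOFunction T μ) (f : (T → ℝ) →ₗ[ℝ] ℝ) (u : T → ℝ) : ℝ :=
  sInf {c : ℝ | ∃ w : ℕ → T → ℝ, (∀ n t, 0 ≤ w n t) ∧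
    (∀ n t, w n t ≤ w (n + 1) t) ∧
    (∀ t, Tendsto (fun n => w n t) atTop (nhds (u t))) ∧ c = ⨆ n, f (w n)}

/-- A functional is purely singular if its order continuous component
vanishes. -/
def PurelySingular (P : MOFunction T μ) (f : (T → ℝ) →ₗ[ℝ] ℝ) : Prop :=
  ∀ u : T → ℝ, P.memLPhi u → (∀ t, 0 ≤ u t) → P.orderContPart f u = 0

/-- `f` is a support functional at `u` in `L_0^Φ`. -/
def IsSupportAt (P : MOFunction T μ) (f : (T → ℝ) →ₗ[ℝ] ℝ) (u : T → ℝ) : Prop :=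
  P.dualNormOrlicz f = 1 ∧ f u = P.orliczNorm u

/-- `u` is a smooth point of `L_0^Φ`: it has exactly one support functional
(as a functional on `L^Φ`). -/
def IsSmoothPoint (P : MOFunction T μ) (u : T → ℝ) : Prop :=
  (∃ f : (T → ℝ) →ₗ[ℝ] ℝ, P.IsSupportAt f u) ∧
    ∀ f g : (T → ℝ) →ₗ[ℝ] ℝ, P.IsSupportAt f u → P.IsSupportAt g u →
      ∀ w : T → ℝ, P.memLPhi w → f w = g w

/-- `θ_Φ(u) = inf{λ > 0 : I_Φ(u/λ) < ∞}`. -/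
def thetaPhi (P : MOFunction T μ) (u : T → ℝ) : ℝ :=
  sInf {l : ℝ | 0 < l ∧ P.modular (fun t => u t / l) < ⊤}

end MOFunction

open MOFunction

variable {T : Type*} [MeasurableSpace T] {μ : Measure T}

/-!
For `w < U`, convexity gives `Φ'_-(t, w) ≤ Φ(t, U) / (U - w)`, and the easy half of Young's
equality gives `Φ*(t, Φ'_-(t, w)) ≤ w Φ'_-(t, w)`; with `w = n/(n+1) U` this yields
`Φ*(t, Φ'_-(t, w)) ≤ n Φ(t, U)`. So `u_n = n/(n+1) u` on the set of finite measure
`{Φ(t, u(t)) ≤ n} ∩ S_n` (with `S_n` the spanning sets of `μ`), and `u_n = 0` on the rest of the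
union of these increasing sets, has finite conjugate modular. The union is conull because
`Φ(t, u(t)) < ∞` a.e.; off it we keep `u_n = u`, so that `u_n → u` everywhere. The function
`t ↦ Φ(t, u(t))` is a.e. measurable because `Φ(t, ·)` is monotone and lower semicontinuous,
hence a supremum of `Φ(t, q)` over rationals `q < u(t)`.
-/

namespace ENNReal

variable {φ : ℝ≥0∞ → ℝ≥0∞}

theorem monotone_of_convexOn (hφ : ConvexOn ℝ≥0 Set.univ φ) (hzero : φ 0 = 0)
    (htop : φ ⊤ = ⊤) : Monotone φ := by
  intro a b hab
  rcases eq_or_ne b ⊤ with rfl | hb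
  · simp [htop]
  rcases eq_or_ne b 0 with rfl | hb0
  · rw [nonpos_iff_eq_zero.mp hab]
  have hab' : a / b ≠ ⊤ := ENNReal.div_ne_top (ne_top_of_le_ne_top hb hab) hb0
  set p : ℝ≥0 := (a / b).toNNReal
  have hp1 : p ≤ 1 := by
    rw [← ENNReal.coe_le_coe, ENNReal.coe_toNNReal hab']
    exact ENNReal.div_le_of_le_mul (by simpa using hab)
  have hpb : p • b = a := by
    rw [ENNReal.smul_def, smul_eq_mul, ENNReal.coe_toNNReal hab', ENNReal.div_mul_cancel hb0 hb]
  have key := hφ.2 (Set.mem_univ b) (Set.mem_univ 0) zero_le zero_le (add_tsub_cancel_of_le hp1)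
  rw [hpb, smul_zero, add_zero, hzero, smul_zero, add_zero] at key
  calc φ a ≤ p • φ b := key
    _ ≤ φ b := by
      rw [ENNReal.smul_def, smul_eq_mul]
      exact mul_le_of_le_one_left zero_le (by exact_mod_cast hp1)

theorem slope_mul_sub_le_of_convexOn (hφ : ConvexOn ℝ≥0 Set.univ φ) (htop : φ ⊤ = ⊤) {x w s : ℝ≥0∞}
    (hxw : x < w) (hws : w < s) : (φ w - φ x) / (w - x) * (s - w) ≤ φ s := by
  rcases eq_or_ne s ⊤ with rfl | hs
  · simp [htop]
  lift s to ℝ≥0 using hs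
  lift w to ℝ≥0 using ne_top_of_lt hws
  lift x to ℝ≥0 using ne_top_of_lt hxw
  norm_cast at hxw hws
  set a := w - x
  set b := s - w
  have ha : 0 < a := tsub_pos_of_lt hxw
  have hb : 0 < b := tsub_pos_of_lt hws
  have hab : (b / (a + b)) + a / (a + b) = 1 := by
    rw [← add_div, add_comm, div_self (by positivity)]
  have hcomb : (b / (a + b)) * x + a / (a + b) * s = w := by
    rw [← NNReal.coe_inj]
    have hx : (x : ℝ) = w - a := by simp [a, NNReal.coe_sub hxw.le]
    have hs : (s : ℝ) = w + b := by simp [b, NNReal.coe_sub hws.le]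
    push_cast
    rw [hx, hs]
    field_simp
    ring
  have hconv := hφ.2 (Set.mem_univ (x : ℝ≥0∞)) (Set.mem_univ (s : ℝ≥0∞)) zero_le zero_le hab
  simp only [ENNReal.smul_def, smul_eq_mul] at hconv
  rw [← ENNReal.coe_mul, ← ENNReal.coe_mul, ← ENNReal.coe_add, hcomb] at hconv
  have hp : ((b / (a + b) : ℝ≥0) : ℝ≥0∞) ≤ 1 := by
    exact_mod_cast hab ▸ le_self_add
  have hdiff : φ w - φ x ≤ ((a / (a + b) : ℝ≥0) : ℝ≥0∞) * φ s :=
    tsub_le_iff_left.mpr (hconv.trans (add_le_add_left (mul_le_of_le_one_left zero_le hp) _))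
  have hweight : a / (a + b) * a⁻¹ * b ≤ 1 := by
    rw [div_mul_eq_mul_div, mul_inv_cancel₀ ha.ne', one_div, inv_mul_le_one₀ (by positivity)]
    exact le_add_self
  rw [← ENNReal.coe_sub, ← ENNReal.coe_sub]
  calc (φ w - φ x) / a * b ≤ (a / (a + b) : ℝ≥0) * φ s / a * b := by gcongr
    _ = φ s * (a / (a + b) * a⁻¹ * b : ℝ≥0) := by
      rw [ENNReal.coe_mul, ENNReal.coe_mul, ENNReal.coe_inv ha.ne', div_eq_mul_inv]
      ring
    _ ≤ φ s := mul_le_of_le_one_right zero_le (by exact_mod_cast hweight)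

theorem iSup_ofReal_rat_lt_eq (hmono : Monotone φ) (hlsc : LowerSemicontinuous φ) (hzero : φ 0 = 0)
    (x : ℝ≥0∞) : ⨆ (q : ℚ) (_ : ENNReal.ofReal q < x), φ (ENNReal.ofReal q) = φ x := by
  refine le_antisymm (iSup₂_le fun q hq => hmono hq.le) ?_
  rcases eq_or_ne x 0 with rfl | hx
  · rw [hzero]
    exact zero_le
  refine le_of_forall_lt fun y hy => ?_
  obtain ⟨l, hlx, hl⟩ := exists_Ioc_subset_of_mem_nhds (hlsc x y hy) ⟨0, pos_iff_ne_zero.mpr hx⟩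
  obtain ⟨q, -, hlq, hqx⟩ := ENNReal.lt_iff_exists_rat_btwn.mp hlx
  exact (hl ⟨hlq, hqx.le⟩).trans_le (le_iSup₂_of_le q hqx le_rfl)

end ENNReal

namespace MOFunction

variable {φ : ℝ≥0∞ → ℝ≥0∞}

theorem leftDeriv_mul_sub_le (hφ : ConvexOn ℝ≥0 Set.univ φ) (htop : φ ⊤ = ⊤) {w s : ℝ≥0∞}
    (hws : w < s) : leftDeriv φ w * (s - w) ≤ φ s := by
  rw [leftDeriv, ENNReal.iSup_mul]
  refine iSup_le fun x => ?_
  rw [ENNReal.iSup_mul]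
  exact iSup_le fun hxw => slope_mul_sub_le_of_convexOn hφ htop hxw hws

theorem leftDeriv_le_div (hφ : ConvexOn ℝ≥0 Set.univ φ) (htop : φ ⊤ = ⊤) {w s : ℝ≥0∞}
    (hws : w < s) (hs : s ≠ ⊤) : leftDeriv φ w ≤ φ s / (s - w) :=
  (ENNReal.le_div_iff_mul_le (Or.inl (tsub_pos_of_lt hws).ne')
    (Or.inl (ne_top_of_le_ne_top hs tsub_le_self))).mpr (leftDeriv_mul_sub_le hφ htop hws)

variable (P : MOFunction T μ)

theorem convexOn_ae : ∀ᵐ t ∂μ, ConvexOn ℝ≥0 Set.univ (P.toFun t) := by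
  filter_upwards [P.convex'] with t ht
  refine ⟨convex_univ, fun x _ y _ a b _ _ hab => ?_⟩
  obtain rfl : b = 1 - a := by rw [← hab, add_tsub_cancel_left]
  exact ht x y a (le_of_add_le_left hab.le)

theorem monotone_ae : ∀ᵐ t ∂μ, Monotone (P.toFun t) := by
  filter_upwards [P.convexOn_ae, P.zero', P.top'] with t hconv hzero htop
  exact monotone_of_convexOn hconv hzero htop

theorem aemeasurable_toFun_comp {v : T → ℝ≥0∞} (hv : Measurable v) :
    AEMeasurable (fun t => P.toFun t (v t)) μ := by
  refine ⟨fun t => ⨆ q : ℚ, {t | ENNReal.ofReal q < v t}.indicator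
    (fun t => P.toFun t (ENNReal.ofReal q)) t,
    Measurable.iSup fun q => (P.measurable' _).indicator (measurableSet_lt measurable_const hv), ?_⟩
  filter_upwards [P.monotone_ae, P.lsc', P.zero'] with t hmono hlsc hzero
  rw [← iSup_ofReal_rat_lt_eq hmono hlsc hzero (v t)]
  simp only [Set.indicator_apply, Set.mem_ofPred_eq, iSup_eq_if]
  rfl

variable {P} {t : T}

theorem conj_leftDeriv_zero : P.conj t (leftDeriv (P.toFun t) 0) = 0 := by
  simp [conj, leftDeriv]

theorem conj_leftDeriv_le (hφ : ConvexOn ℝ≥0 Set.univ (P.toFun t)) (htop : P.toFun t ⊤ = ⊤)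
    (w : ℝ≥0∞) : P.conj t (leftDeriv (P.toFun t) w) ≤ w * leftDeriv (P.toFun t) w := by
  refine iSup₂_le fun s _ => tsub_le_iff_right.mpr ?_
  rcases le_or_gt s w with hsw | hws
  · exact le_add_right (mul_le_mul_left hsw _)
  · calc s * leftDeriv (P.toFun t) w
        = w * leftDeriv (P.toFun t) w + leftDeriv (P.toFun t) w * (s - w) := by
          rw [mul_comm _ (s - w), ← add_mul, add_tsub_cancel_of_le hws.le]
      _ ≤ w * leftDeriv (P.toFun t) w + P.toFun t s := by
          gcongr
          exact leftDeriv_mul_sub_le hφ htop hws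

theorem conj_leftDeriv_natCast_mul_le (hφ : ConvexOn ℝ≥0 Set.univ (P.toFun t))
    (htop : P.toFun t ⊤ = ⊤) (n : ℕ) {d : ℝ≥0∞} (hd : d ≠ ⊤) :
    P.conj t (leftDeriv (P.toFun t) (n * d)) ≤ n * P.toFun t ((n + 1) * d) := by
  rcases eq_or_ne d 0 with rfl | hd0
  · rw [mul_zero, conj_leftDeriv_zero]
    exact zero_le
  have hnd : (n : ℝ≥0∞) * d ≠ ⊤ := ENNReal.mul_ne_top (ENNReal.natCast_ne_top n) hd
  have hlt : (n : ℝ≥0∞) * d < (n + 1) * d := by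
    rw [add_mul, one_mul]
    exact ENNReal.lt_add_right hnd hd0
  have hsub : (n + 1) * d - n * d = d := by
    rw [add_mul, one_mul, ENNReal.add_sub_cancel_left hnd]
  have hU : ((n : ℝ≥0∞) + 1) * d ≠ ⊤ :=
    ENNReal.mul_ne_top (ENNReal.add_ne_top.mpr ⟨ENNReal.natCast_ne_top n, ENNReal.one_ne_top⟩) hd
  calc P.conj t (leftDeriv (P.toFun t) (n * d))
      ≤ n * d * leftDeriv (P.toFun t) (n * d) := conj_leftDeriv_le hφ htop _
    _ ≤ n * d * (P.toFun t ((n + 1) * d) / d) := by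
      gcongr
      simpa only [hsub] using leftDeriv_le_div hφ htop hlt hU
    _ = n * (d * (P.toFun t ((n + 1) * d) / d)) := mul_assoc _ _ _
    _ ≤ n * P.toFun t ((n + 1) * d) := by
      gcongr
      exact ENNReal.mul_div_le

theorem conj_leftDeriv_ofReal_le (hφ : ConvexOn ℝ≥0 Set.univ (P.toFun t))
    (htop : P.toFun t ⊤ = ⊤) (n : ℕ) (r : ℝ) :
    P.conj t (leftDeriv (P.toFun t) (ENNReal.ofReal (n / (n + 1) * r))) ≤
      n * P.toFun t (ENNReal.ofReal r) := by
  have hw : ENNReal.ofReal (n / (n + 1) * r) = n * ENNReal.ofReal (r / (n + 1)) := by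
    rw [← ENNReal.ofReal_natCast, ← ENNReal.ofReal_mul (by positivity)]
    ring_nf
  have hU : ENNReal.ofReal r = (n + 1) * ENNReal.ofReal (r / (n + 1)) := by
    rw [← ENNReal.ofReal_natCast, ← ENNReal.ofReal_one,
      ← ENNReal.ofReal_add (by positivity) zero_le_one, ← ENNReal.ofReal_mul (by positivity)]
    field_simp
  rw [hw, hU]
  exact conj_leftDeriv_natCast_mul_le hφ htop n ENNReal.ofReal_ne_top

end MOFunction

section ApproxBelow

variable {X : Type*} (B : ℕ → Set X) (u : X → ℝ)

open Classical in
def approxBelow (n : ℕ) (t : X) : ℝ :=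
  if t ∈ B n then n / (n + 1) * u t else if t ∈ ⋃ k, B k then 0 else u t

theorem measurable_approxBelow [MeasurableSpace X] (hB : ∀ n, MeasurableSet (B n))
    (hu : Measurable u) (n : ℕ) :
    Measurable (approxBelow B u n) :=
  (measurable_const.mul hu).ite (hB n) (measurable_const.ite (MeasurableSet.iUnion hB) hu)

variable {u}

theorem approxBelow_nonneg (hu : ∀ t, 0 ≤ u t) (n : ℕ) (t : X) : 0 ≤ approxBelow B u n t := by
  unfold approxBelow
  split_ifs
  exacts [mul_nonneg (by positivity) (hu t), le_rfl, hu t]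

variable {B}

theorem approxBelow_le_succ (hB : Monotone B) (hu : ∀ t, 0 ≤ u t) (n : ℕ) (t : X) :
    approxBelow B u n t ≤ approxBelow B u (n + 1) t := by
  by_cases hn : t ∈ B n
  · simp only [approxBelow, if_pos hn, if_pos (hB n.le_succ hn)]
    refine mul_le_mul_of_nonneg_right ?_ (hu t)
    rw [div_le_div_iff₀ (by positivity) (by positivity)]
    push_cast
    linarith
  · by_cases ht : t ∈ ⋃ k, B k
    · simpa only [approxBelow, if_neg hn, if_pos ht] using approxBelow_nonneg B hu (n + 1) t
    · have hn' : t ∉ B (n + 1) := fun h => ht (Set.mem_iUnion_of_mem _ h)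
      simp only [approxBelow, if_neg hn, if_neg hn', if_neg ht, le_rfl]

theorem tendsto_approxBelow (hB : Monotone B) (t : X) :
    Tendsto (fun n => approxBelow B u n t) atTop (𝓝 (u t)) := by
  by_cases ht : t ∈ ⋃ k, B k
  · obtain ⟨k, hk⟩ := Set.mem_iUnion.mp ht
    have hlim : Tendsto (fun n : ℕ => (n : ℝ) / (n + 1) * u t) atTop (𝓝 (u t)) := by
      simpa using (tendsto_natCast_div_add_atTop (1 : ℝ)).mul_const (u t)
    refine hlim.congr' ?_
    filter_upwards [eventually_ge_atTop k] with n hn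
    simp only [approxBelow, if_pos (hB hn hk)]
  · have hconst : ∀ n, approxBelow B u n t = u t := fun n => by
      have hn : t ∉ B n := fun h => ht (Set.mem_iUnion_of_mem _ h)
      simp only [approxBelow, if_neg hn, if_neg ht]
    simp only [hconst, tendsto_const_nhds]

end ApproxBelow

theorem MOFunction.lintegral_conj_leftDeriv_approxBelow_lt_top [SigmaFinite μ]
    (P : MOFunction T μ) {u : T → ℝ} (hfin : ∀ᵐ t ∂μ, P.toFun t (ENNReal.ofReal (u t)) < ⊤)
    {g : T → ℝ≥0∞} (hgu : (fun t => P.toFun t (ENNReal.ofReal (u t))) =ᵐ[μ] g) (n : ℕ) :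
    ∫⁻ t, P.conj t (leftDeriv (P.toFun t) (ENNReal.ofReal
      (approxBelow (fun k => spanningSets μ k ∩ {t | g t ≤ k}) u n t))) ∂μ < ⊤ := by
  set B : ℕ → Set T := fun k => spanningSets μ k ∩ {t | g t ≤ k}
  have hbound : ∀ᵐ t ∂μ, P.conj t (leftDeriv (P.toFun t) (ENNReal.ofReal (approxBelow B u n t)))
      ≤ (spanningSets μ n).indicator (fun _ => (n : ℝ≥0∞) * n) t := by
    filter_upwards [P.convexOn_ae, P.top', hfin, hgu] with t hφ htop hfint hgt
    by_cases htB : t ∈ B n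
    · rw [Set.indicator_of_mem htB.1]
      simp only [approxBelow, if_pos htB]
      calc _ ≤ n * P.toFun t (ENNReal.ofReal (u t)) := conj_leftDeriv_ofReal_le hφ htop n (u t)
        _ ≤ n * n := by
          rw [hgt]
          exact mul_le_mul_right htB.2 _
    · have ht : t ∈ ⋃ k, B k := by
        obtain ⟨k, hk⟩ := Set.mem_iUnion.mp (iUnion_spanningSets μ ▸ Set.mem_univ t)
        obtain ⟨m, hm⟩ := ENNReal.exists_nat_gt (hgt ▸ hfint).ne
        refine Set.mem_iUnion.mpr ⟨max k m, monotone_spanningSets μ (le_max_left k m) hk, ?_⟩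
        exact hm.le.trans (by exact_mod_cast le_max_right k m)
      simp only [approxBelow, if_neg htB, if_pos ht, ENNReal.ofReal_zero, conj_leftDeriv_zero,
        zero_le]
  calc _ ≤ ∫⁻ t, (spanningSets μ n).indicator (fun _ => (n : ℝ≥0∞) * n) t ∂μ :=
        lintegral_mono_ae hbound
    _ = n * n * μ (spanningSets μ n) :=
        lintegral_indicator_const (measurableSet_spanningSets μ n) _
    _ < ⊤ := ENNReal.mul_lt_top (ENNReal.mul_lt_top (ENNReal.natCast_lt_top n)
        (ENNReal.natCast_lt_top n)) (measure_spanningSets_lt_top μ n)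

theorem stmt0_general [SigmaFinite μ] (P : MOFunction T μ)
    (u : T → ℝ) (hu : Measurable u) (hpos : ∀ t, 0 ≤ u t)
    (hfin : ∀ᵐ t ∂μ, P.toFun t (ENNReal.ofReal (u t)) < ⊤) :
    ∃ un : ℕ → T → ℝ, (∀ n, Measurable (un n)) ∧ (∀ n t, 0 ≤ un n t) ∧
      (∀ n t, un n t ≤ un (n + 1) t) ∧
      (∀ t, Tendsto (fun n => un n t) atTop (nhds (u t))) ∧
      ∀ n, (∫⁻ t, P.conj t (leftDeriv (P.toFun t) (ENNReal.ofReal (un n t))) ∂μ) < ⊤ := by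
  have hg := P.aemeasurable_toFun_comp (ENNReal.measurable_ofReal.comp hu)
  set B : ℕ → Set T := fun k => spanningSets μ k ∩ {t | hg.mk _ t ≤ k}
  have hBmono : Monotone B := fun k l hkl =>
    Set.inter_subset_inter (monotone_spanningSets μ hkl) fun t (ht : _ ≤ (k : ℝ≥0∞)) =>
      ht.trans (by exact_mod_cast hkl)
  have hBmeas : ∀ k, MeasurableSet (B k) := fun k =>
    (measurableSet_spanningSets μ k).inter (measurableSet_le hg.measurable_mk measurable_const)
  exact ⟨approxBelow B u, measurable_approxBelow B u hBmeas hu, approxBelow_nonneg B hpos,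
    approxBelow_le_succ hBmono hpos, tendsto_approxBelow hBmono,
    P.lintegral_conj_leftDeriv_approxBelow_lt_top hfin hg.ae_eq_mk⟩

/-- approximation from below with finite conjugate modular of the
left derivative. -/
theorem stmt0 [SigmaFinite μ] (hna : IsNonatomic μ) (P : MOFunction T μ)
    (u : T → ℝ) (hu : Measurable u) (hpos : ∀ t, 0 ≤ u t)
    (hfin : ∀ᵐ t ∂μ, P.toFun t (ENNReal.ofReal (u t)) < ⊤) :
    ∃ un : ℕ → T → ℝ, (∀ n, Measurable (un n)) ∧ (∀ n t, 0 ≤ un n t) ∧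
      (∀ n t, un n t ≤ un (n + 1) t) ∧
      (∀ t, Tendsto (fun n => un n t) atTop (nhds (u t))) ∧
      ∀ n, (∫⁻ t, P.conj t (leftDeriv (P.toFun t) (ENNReal.ofReal (un n t))) ∂μ) < ⊤ :=
  stmt0_general P u hu hpos hfin
end
end

section
/- If u ∈ 𝐿̃^Φ satisfies I_Φ(λu) = ∞ for every λ > 1, then there exist non-increasing sequences of measurable sets (A_n) and (B_n), each converging to the empty set, with A_n ∩ B_n = ∅ and I_Φ(λ u χ_{A_n}) = I_Φ(λ u χ_{B_n}) = ∞ for every λ > 1 and every n ≥ 1. -/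
open MeasureTheory ENNReal NNReal Filter Topology

noncomputable section

open MOFunction

variable {T : Type*} [MeasurableSpace T] {μ : Measure T}

/-! Take `cₖ ↓ 1` and measurable minorants `gₖ` of `t ↦ Φ(t, cₖ|u(t)|)`, antitone in `k`,
with `∫ gₖ = ∞`. By σ-finiteness one can repeatedly cut from the current set `F` a piece `G`
with `∫_G gₖ ≥ 1` on which all late `gⱼ` have finite integral, so that `∫_{F \ G} gⱼ = ∞`
persists; where all `gⱼ` are infinite on a set of positive measure, non-atomicity supplies
the cut instead. This yields disjoint sets `Dᵢ` with `∫_{Dᵢ} gᵢ ≥ 1`, and the tails of the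
even and of the odd `Dᵢ` give `Aₙ` and `Bₙ`. -/

section

open Set
open scoped Function

theorem monotone_of_convex_of_map_zero_of_map_top {f : ℝ≥0∞ → ℝ≥0∞}
    (hconv : ∀ a b : ℝ≥0∞, ∀ p : ℝ≥0, p ≤ 1 →
      f (p • a + (1 - p) • b) ≤ p • f a + (1 - p) • f b)
    (h0 : f 0 = 0) (htop : f ⊤ = ⊤) : Monotone f := by
  intro x y hxy
  rcases eq_or_ne y ⊤ with rfl | hy
  · simp [htop]
  rcases eq_or_ne y 0 with rfl | hy0
  · rw [nonpos_iff_eq_zero.1 hxy]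
  set p : ℝ≥0 := (x / y).toNNReal
  have hp : (p : ℝ≥0∞) = x / y :=
    ENNReal.coe_toNNReal (ENNReal.div_ne_top (ne_top_of_le_ne_top hy hxy) hy0)
  have hp1 : p ≤ 1 := by
    have : (p : ℝ≥0∞) ≤ 1 := hp ▸ ENNReal.div_le_of_le_mul (by rwa [one_mul])
    exact_mod_cast this
  have hpy : p • y = x := by
    rw [ENNReal.smul_def, smul_eq_mul, hp, ENNReal.div_mul_cancel hy0 hy]
  calc f x = f (p • y + (1 - p) • 0) := by rw [smul_zero, add_zero, hpy]
    _ ≤ p • f y + (1 - p) • f 0 := hconv y 0 p hp1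
    _ = p * f y := by rw [h0, smul_zero, add_zero, ENNReal.smul_def, smul_eq_mul]
    _ ≤ f y := mul_le_of_le_one_left' (by exact_mod_cast hp1)

theorem exists_measurable_antitone_le_of_lintegral_eq_top {F : ℕ → T → ℝ≥0∞}
    (hF : ∀ᵐ t ∂μ, Antitone fun k => F k t) (htop : ∀ k, ∫⁻ t, F k t ∂μ = ⊤) :
    ∃ g : ℕ → T → ℝ≥0∞, (∀ k, Measurable (g k)) ∧ Antitone g ∧
      (∀ k, g k ≤ᵐ[μ] F k) ∧ ∀ k, ∫⁻ t, g k t ∂μ = ⊤ := by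
  choose h hhm hhF hh using fun k => exists_measurable_le_lintegral_eq μ (F k)
  refine ⟨fun k t => ⨆ j ≥ k, h j t, fun k => ?_, fun a b hab t => ?_, fun k => ?_,
    fun k => ?_⟩
  · exact Measurable.iSup fun j => Measurable.iSup fun _ => hhm j
  · exact biSup_mono fun j hj => hab.trans hj
  · filter_upwards [hF] with t ht
    exact iSup₂_le fun j hj => (hhF j t).trans (ht hj)
  · rw [eq_top_iff, ← htop k, hh k]
    exact lintegral_mono fun t => le_iSup₂ (f := fun j _ => h j t) k le_rfl

section CuttingSets

variable {g : ℕ → T → ℝ≥0∞}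

theorem exists_subset_one_le_setLIntegral_lt_top [SigmaFinite μ]
    (hgm : ∀ k, Measurable (g k)) (hg : Antitone g) {F : Set T} (hF : MeasurableSet F)
    (hZ : μ (F ∩ {t | ∀ j, g j t = ⊤}) = 0) {k : ℕ} (htop : ∫⁻ t in F, g k t ∂μ = ⊤) :
    ∃ G ⊆ F, MeasurableSet G ∧ 1 ≤ ∫⁻ t in G, g k t ∂μ ∧
      ∃ k', ∀ j ≥ k', ∫⁻ t in G, g j t ∂μ < ⊤ := by
  set Z := F ∩ {t | ∀ j, g j t = ⊤}
  -- bounding `g (k + N)` rather than `g k` lets `W N` exhaust `F` up to the null set `Z`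
  set W : ℕ → Set T := fun N => F ∩ {t | g (k + N) t ≤ N} ∩ spanningSets μ N
  have hWm : ∀ N, MeasurableSet (W N) := fun N =>
    (hF.inter (measurableSet_le (hgm _) measurable_const)).inter (measurableSet_spanningSets μ N)
  have hW : Monotone W := fun a b hab t ⟨⟨htF, htg⟩, htS⟩ =>
    ⟨⟨htF, (hg (by omega) t).trans (htg.trans (by exact_mod_cast hab))⟩,
      monotone_spanningSets μ hab htS⟩
  have hFW : F ⊆ (⋃ N, W N) ∪ Z := by
    intro t htF
    by_cases hall : ∀ j, g j t = ⊤
    · exact Or.inr ⟨htF, hall⟩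
    obtain ⟨j, hj⟩ := not_forall.1 hall
    obtain ⟨r, hr⟩ := ENNReal.exists_nat_gt hj
    set N := max j (max r (spanningSetsIndex μ t))
    refine Or.inl (mem_iUnion.2
      ⟨N, ⟨htF, ?_⟩, mem_spanningSets_of_index_le μ t (by omega)⟩)
    calc g (k + N) t ≤ g j t := hg (by omega) t
      _ ≤ r := hr.le
      _ ≤ N := by exact_mod_cast (by omega : r ≤ N)
  have hsup : ⨆ N, ∫⁻ t in W N, g k t ∂μ = ⊤ := by
    rw [← setLIntegral_iUnion_of_directed _ hW.directed_le, eq_top_iff, ← htop]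
    calc ∫⁻ t in F, g k t ∂μ ≤ ∫⁻ t in (⋃ N, W N) ∪ Z, g k t ∂μ := lintegral_mono_set hFW
      _ ≤ ∫⁻ t in ⋃ N, W N, g k t ∂μ + ∫⁻ t in Z, g k t ∂μ := lintegral_union_le _ _ _
      _ = ∫⁻ t in ⋃ N, W N, g k t ∂μ := by rw [setLIntegral_measure_zero _ _ hZ, add_zero]
  obtain ⟨N, hN⟩ := lt_iSup_iff.1 (hsup ▸ one_lt_top :
    1 < ⨆ N, ∫⁻ t in W N, g k t ∂μ)
  refine ⟨W N, fun t ht => ht.1.1, hWm N, hN.le, k + N, fun j hj => ?_⟩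
  calc ∫⁻ t in W N, g j t ∂μ ≤ ∫⁻ _ in W N, (N : ℝ≥0∞) ∂μ :=
        setLIntegral_mono measurable_const fun t ht => (hg hj t).trans ht.1.2
    _ = N * μ (W N) := setLIntegral_const _ _
    _ ≤ N * μ (spanningSets μ N) := by gcongr; exact inter_subset_right
    _ < ⊤ := ENNReal.mul_lt_top (natCast_lt_top N) (measure_spanningSets_lt_top μ N)

theorem exists_subset_one_le_setLIntegral_sdiff [SigmaFinite μ] (hna : IsNonatomic μ)
    (hgm : ∀ k, Measurable (g k)) (hg : Antitone g) {F : Set T} (hF : MeasurableSet F) {k : ℕ}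
    (htop : ∀ j ≥ k, ∫⁻ t in F, g j t ∂μ = ⊤) :
    ∃ F' ⊆ F, MeasurableSet F' ∧ 1 ≤ ∫⁻ t in F \ F', g k t ∂μ ∧
      ∃ k' > k, ∀ j ≥ k', ∫⁻ t in F', g j t ∂μ = ⊤ := by
  set Z := F ∩ {t | ∀ j, g j t = ⊤}
  have hZm : MeasurableSet Z := hF.inter (by measurability)
  rcases eq_zero_or_pos (μ Z) with hZ | hZ
  · obtain ⟨G, hGF, hGm, hG1, k', hk'⟩ :=
      exists_subset_one_le_setLIntegral_lt_top hgm hg hF hZ (htop k le_rfl)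
    refine ⟨F \ G, sdiff_subset, hF.diff hGm, by rwa [sdiff_sdiff_cancel_left hGF],
      max k' (k + 1), by omega, fun j hj => ?_⟩
    have hsplit := lintegral_inter_add_sdiff (μ := μ) (g j) F hGm
    rw [inter_eq_right.2 hGF, htop j (by omega)] at hsplit
    exact (ENNReal.add_eq_top.1 hsplit).resolve_left (hk' j (by omega)).ne
  · have hZtop : ∀ s ⊆ Z, MeasurableSet s → 0 < μ s →
        ∀ j, ∫⁻ t in s, g j t ∂μ = ⊤ := fun s hsZ hsm hs j => by
        rw [setLIntegral_congr_fun hsm fun t ht => (hsZ ht).2 j, setLIntegral_const,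
          top_mul hs.ne']
    obtain ⟨G, hGZ, hGm, hG, hGlt⟩ := hna Z hZm hZ
    have hZG : 0 < μ (Z \ G) := (tsub_pos_of_lt hGlt).trans_le le_measure_sdiff
    refine ⟨F \ G, sdiff_subset, hF.diff hGm, ?_, k + 1, lt_add_one k, fun j _ => ?_⟩
    · rw [sdiff_sdiff_cancel_left (hGZ.trans inter_subset_left), hZtop G hGZ hGm hG]
      exact le_top
    · rw [eq_top_iff, ← hZtop (Z \ G) sdiff_subset (hZm.diff hGm) hZG j]
      exact lintegral_mono_set (sdiff_subset_sdiff_left inter_subset_left)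

theorem exists_pairwise_disjoint_one_le_setLIntegral [SigmaFinite μ] (hna : IsNonatomic μ)
    (hgm : ∀ k, Measurable (g k)) (hg : Antitone g) (htop : ∀ k, ∫⁻ t, g k t ∂μ = ⊤) :
    ∃ D : ℕ → Set T, (∀ i, MeasurableSet (D i)) ∧ Pairwise (Disjoint on D) ∧
      ∀ i, 1 ≤ ∫⁻ t in D i, g i t ∂μ := by
  let S := {p : Set T × ℕ //
    MeasurableSet p.1 ∧ ∀ j ≥ p.2, ∫⁻ t in p.1, g j t ∂μ = ⊤}
  have step : ∀ p : S, ∃ q : S, q.1.1 ⊆ p.1.1 ∧ p.1.2 < q.1.2 ∧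
      1 ≤ ∫⁻ t in p.1.1 \ q.1.1, g p.1.2 t ∂μ := by
    rintro ⟨⟨F, k⟩, hF, hFtop⟩
    obtain ⟨F', hF'F, hF'm, h1, k', hkk', hk'⟩ :=
      exists_subset_one_le_setLIntegral_sdiff hna hgm hg hF hFtop
    exact ⟨⟨(F', k'), hF'm, hk'⟩, hF'F, hkk', h1⟩
  choose next hsub hlt h1 using step
  let s : ℕ → S := fun n => next^[n]
    ⟨(univ, 0), MeasurableSet.univ, fun j _ => by rw [Measure.restrict_univ]; exact htop j⟩
  have hs : ∀ n, s (n + 1) = next (s n) := fun n => Function.iterate_succ_apply' next n _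
  have hanti : Antitone fun n => (s n).1.1 :=
    antitone_nat_of_succ_le fun n => by rw [hs]; exact hsub (s n)
  have hk : StrictMono fun n => (s n).1.2 :=
    strictMono_nat_of_lt_succ fun n => by rw [hs]; exact hlt (s n)
  refine ⟨fun n => (s n).1.1 \ (s (n + 1)).1.1, fun n => (s n).2.1.diff (s (n + 1)).2.1,
    (pairwise_disjoint_on _).2 fun m n hmn => disjoint_left.2 fun t htm htn =>
      htm.2 (hanti (Nat.succ_le_of_lt hmn) htn.1), fun n => ?_⟩
  calc 1 ≤ ∫⁻ t in (s n).1.1 \ (s (n + 1)).1.1, g (s n).1.2 t ∂μ := by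
        rw [hs]; exact h1 (s n)
    _ ≤ ∫⁻ t in (s n).1.1 \ (s (n + 1)).1.1, g n t ∂μ :=
        lintegral_mono fun t => hg (hk.id_le n) t

theorem setLIntegral_iUnion_comp_eq_top {D : ℕ → Set T} (hDm : ∀ i, MeasurableSet (D i))
    (hD : Pairwise (Disjoint on D)) (hg : Antitone g)
    (h1 : ∀ i, 1 ≤ ∫⁻ t in D i, g i t ∂μ) {e : ℕ → ℕ} (he : StrictMono e) (k : ℕ) :
    ∫⁻ t in ⋃ i, D (e i), g k t ∂μ = ⊤ := by
  rw [lintegral_iUnion (fun i => hDm (e i)) (hD.comp_of_injective he.injective), eq_top_iff]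
  calc ⊤ = ∑' _ : ℕ, (1 : ℝ≥0∞) :=
        (ENNReal.tsum_const_eq_top_of_ne_zero one_ne_zero).symm
    _ ≤ ∑' i, ∫⁻ t in D (e (i + k)), g k t ∂μ := ENNReal.tsum_le_tsum fun i =>
        (h1 _).trans (lintegral_mono fun t => hg (le_add_self.trans (he.id_le _)) t)
    _ ≤ ∑' i, ∫⁻ t in D (e i), g k t ∂μ :=
        ENNReal.tsum_comp_le_tsum_of_injective (add_left_injective k) _

end CuttingSets

theorem iUnion_add_succ_subset {α : Type*} (E : ℕ → Set α) (n : ℕ) :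
    ⋃ i, E (n + 1 + i) ⊆ ⋃ i, E (n + i) :=
  iUnion_subset fun i => subset_iUnion_of_subset (i + 1) (by rw [add_right_comm, add_assoc])

theorem iInter_iUnion_eq_empty_of_le {α : Type*} {D : ℕ → Set α}
    (hD : Pairwise (Disjoint on D)) {f : ℕ → ℕ → ℕ} (hf : ∀ n i, n ≤ f n i) :
    ⋂ n, ⋃ i, D (f n i) = ∅ := by
  refine eq_empty_of_forall_notMem fun t ht => ?_
  simp only [mem_iInter, mem_iUnion] at ht
  obtain ⟨i, hi⟩ := ht 0
  obtain ⟨j, hj⟩ := ht (f 0 i + 1)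
  exact disjoint_left.1 (hD (by have := hf (f 0 i + 1) j; omega)) hi hj

theorem exists_antitone_disjoint_setLIntegral_eq_top [SigmaFinite μ] (hna : IsNonatomic μ)
    {g : ℕ → T → ℝ≥0∞} (hgm : ∀ k, Measurable (g k)) (hg : Antitone g)
    (htop : ∀ k, ∫⁻ t, g k t ∂μ = ⊤) :
    ∃ A B : ℕ → Set T,
      (∀ n, MeasurableSet (A n)) ∧ (∀ n, MeasurableSet (B n)) ∧
      (∀ n, A (n + 1) ⊆ A n) ∧ (∀ n, B (n + 1) ⊆ B n) ∧
      (⋂ n, A n) = ∅ ∧ (⋂ n, B n) = ∅ ∧ (∀ n, A n ∩ B n = ∅) ∧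
      ∀ n k, ∫⁻ t in A n, g k t ∂μ = ⊤ ∧ ∫⁻ t in B n, g k t ∂μ = ⊤ := by
  obtain ⟨D, hDm, hD, h1⟩ := exists_pairwise_disjoint_one_le_setLIntegral hna hgm hg htop
  refine ⟨fun n => ⋃ i, D (2 * (n + i)), fun n => ⋃ i, D (2 * (n + i) + 1),
    fun n => .iUnion fun i => hDm _, fun n => .iUnion fun i => hDm _,
    fun n => iUnion_add_succ_subset (fun i => D (2 * i)) n,
    fun n => iUnion_add_succ_subset (fun i => D (2 * i + 1)) n,
    iInter_iUnion_eq_empty_of_le hD fun n i => by omega,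
    iInter_iUnion_eq_empty_of_le hD fun n i => by omega, fun n => ?_, fun n k =>
    ⟨setLIntegral_iUnion_comp_eq_top hDm hD hg h1 (fun a b h => by omega) k,
      setLIntegral_iUnion_comp_eq_top hDm hD hg h1 (fun a b h => by omega) k⟩⟩
  refine eq_empty_of_forall_notMem fun t ⟨htA, htB⟩ => ?_
  obtain ⟨i, hi⟩ := mem_iUnion.1 htA
  obtain ⟨j, hj⟩ := mem_iUnion.1 htB
  exact disjoint_left.1 (hD (by omega)) hi hj

namespace MOFunction

theorem monotone_toFun_ae (P : MOFunction T μ) : ∀ᵐ t ∂μ, Monotone (P.toFun t) := by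
  filter_upwards [P.convex', P.zero', P.top'] with t hconv h0 htop
  exact monotone_of_convex_of_map_zero_of_map_top hconv h0 htop

theorem exists_measurable_antitone_le_of_modular_eq_top (P : MOFunction T μ) {u : T → ℝ}
    (hinf : ∀ l : ℝ, 1 < l → P.modular (fun t => l * u t) = ⊤) :
    ∃ g : ℕ → T → ℝ≥0∞, (∀ k, Measurable (g k)) ∧ Antitone g ∧
      (∀ k, ∫⁻ t, g k t ∂μ = ⊤) ∧
      ∀ l : ℝ, 1 < l → ∃ k, g k ≤ᵐ[μ] fun t => P.toFun t (ENNReal.ofReal |l * u t|) := by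
  set c : ℕ → ℝ := fun k => 1 + 1 / ((k : ℝ) + 1)
  have hc1 : ∀ k, 1 < c k := fun k => lt_add_of_pos_right 1 Nat.one_div_pos_of_nat
  have hmono : ∀ᵐ t ∂μ, ∀ a b : ℝ, 0 ≤ a → a ≤ b →
      P.toFun t (ENNReal.ofReal |a * u t|) ≤ P.toFun t (ENNReal.ofReal |b * u t|) := by
    filter_upwards [P.monotone_toFun_ae] with t ht a b ha hab
    refine ht (ENNReal.ofReal_le_ofReal ?_)
    rw [abs_mul, abs_mul, abs_of_nonneg ha, abs_of_nonneg (ha.trans hab)]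
    gcongr
  obtain ⟨g, hgm, hg, hgF, htop⟩ := exists_measurable_antitone_le_of_lintegral_eq_top
    (F := fun k t => P.toFun t (ENNReal.ofReal |c k * u t|))
    (by filter_upwards [hmono] with t ht a b hab
        exact ht _ _ (zero_le_one.trans (hc1 b).le) (by simp only [c]; gcongr))
    fun k => hinf (c k) (hc1 k)
  refine ⟨g, hgm, hg, htop, fun l hl => ?_⟩
  obtain ⟨k, hk⟩ := exists_nat_one_div_lt (sub_pos.2 hl)
  refine ⟨k, (hgF k).trans ?_⟩
  filter_upwards [hmono] with t ht
  exact ht _ _ (zero_le_one.trans (hc1 k).le) (by simp only [c]; linarith)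

theorem modular_mul_indicator_eq_top (P : MOFunction T μ) {u : T → ℝ} {C : Set T}
    (hC : MeasurableSet C) {l : ℝ} {g : T → ℝ≥0∞}
    (hg : g ≤ᵐ[μ] fun t => P.toFun t (ENNReal.ofReal |l * u t|))
    (htop : ∫⁻ t in C, g t ∂μ = ⊤) : P.modular (fun t => l * C.indicator u t) = ⊤ := by
  rw [eq_top_iff, ← htop]
  calc ∫⁻ t in C, g t ∂μ ≤ ∫⁻ t in C, P.toFun t (ENNReal.ofReal |l * u t|) ∂μ :=
        lintegral_mono_ae (ae_restrict_of_ae hg)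
    _ = ∫⁻ t in C, P.toFun t (ENNReal.ofReal |l * C.indicator u t|) ∂μ :=
        setLIntegral_congr_fun hC fun t ht => by rw [indicator_of_mem ht]
    _ ≤ P.modular (fun t => l * C.indicator u t) := setLIntegral_le_lintegral _ _

end MOFunction

end

theorem stmt14_general [SigmaFinite μ] (hna : IsNonatomic μ) (P : MOFunction T μ)
    (u : T → ℝ)
    (hinf : ∀ l : ℝ, 1 < l → P.modular (fun t => l * u t) = ⊤) :
    ∃ A B : ℕ → Set T,
      (∀ n, MeasurableSet (A n)) ∧ (∀ n, MeasurableSet (B n)) ∧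
      (∀ n, A (n + 1) ⊆ A n) ∧ (∀ n, B (n + 1) ⊆ B n) ∧
      (⋂ n, A n) = ∅ ∧ (⋂ n, B n) = ∅ ∧
      (∀ n, A n ∩ B n = ∅) ∧
      (∀ n, ∀ l : ℝ, 1 < l →
        P.modular (fun t => l * Set.indicator (A n) u t) = ⊤ ∧
        P.modular (fun t => l * Set.indicator (B n) u t) = ⊤) := by
  obtain ⟨g, hgm, hg, htop, hle⟩ := P.exists_measurable_antitone_le_of_modular_eq_top hinf
  obtain ⟨A, B, hAm, hBm, hA, hB, hA0, hB0, hAB, hABtop⟩ :=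
    exists_antitone_disjoint_setLIntegral_eq_top hna hgm hg htop
  refine ⟨A, B, hAm, hBm, hA, hB, hA0, hB0, hAB, fun n l hl => ?_⟩
  obtain ⟨k, hk⟩ := hle l hl
  exact ⟨P.modular_mul_indicator_eq_top (hAm n) hk (hABtop n k).1,
    P.modular_mul_indicator_eq_top (hBm n) hk (hABtop n k).2⟩

/-- disjoint decreasing sequences of sets carrying infinite
modular. -/
theorem stmt14 [SigmaFinite μ] (hna : IsNonatomic μ) (P : MOFunction T μ)
    (u : T → ℝ) (hum : Measurable u) (hfin : P.modular u < ⊤)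
    (hinf : ∀ l : ℝ, 1 < l → P.modular (fun t => l * u t) = ⊤) :
    ∃ A B : ℕ → Set T,
      (∀ n, MeasurableSet (A n)) ∧ (∀ n, MeasurableSet (B n)) ∧
      (∀ n, A (n + 1) ⊆ A n) ∧ (∀ n, B (n + 1) ⊆ B n) ∧
      (⋂ n, A n) = ∅ ∧ (⋂ n, B n) = ∅ ∧
      (∀ n, A n ∩ B n = ∅) ∧
      (∀ n, ∀ l : ℝ, 1 < l →
        P.modular (fun t => l * Set.indicator (A n) u t) = ⊤ ∧
        P.modular (fun t => l * Set.indicator (B n) u t) = ⊤) :=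
  stmt14_general hna P u hinf
end
end
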